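/- Let p be an odd prime and n a natural number with p^{2l} | n. Then A(p^{2l+1}; n) = p^{−l−3} (p·T(n/p^{2l}) − p³), where T(m) denotes the number of triples (x₁,x₂,x₃) with 1 ≤ x_i ≤ p and x₁²+x₂²+x₃² ≡ m (mod p). -/

import Mathlib

open Finset

/-- `e z = exp(2 π i z)`. -/
noncomputable def e (z : ℝ) : ℂ := Complex.exp (2 * Real.pi * Complex.I * z)

/-- The quadratic Gauss sum `S(q,a) = ∑_{r=1}^{q} e(a r² / q)`. -/
noncomputable def S (q : ℕ) (a : ℤ) : ℂ :=
  ∑ r ∈ Finset.Icc 1 q, e ((a : ℝ) * (r : ℝ) ^ 2 / (q : ℝ))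

/-- `A(q;n) = ∑_{1 ≤ a ≤ q, gcd(a,q)=1} q⁻³ S(q,a)³ e(-n a / q)` (so `A(1;n)=1`). -/
noncomputable def A (q n : ℕ) : ℂ :=
  ∑ a ∈ (Finset.Icc 1 q).filter (fun a => Nat.gcd a q = 1),
    (q : ℂ) ^ (-(3 : ℤ)) * S q (a : ℤ) ^ 3 * e (-((n : ℝ) * (a : ℝ) / (q : ℝ)))

/-- `T(m)`: the number of triples `(x₁,x₂,x₃)` with `1 ≤ xᵢ ≤ p` and
`x₁² + x₂² + x₃² ≡ m (mod p)`. -/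
noncomputable def Tcount (p : ℕ) (m : ℤ) : ℕ :=
  Finset.card <| Finset.filter
    (fun x : ℤ × ℤ × ℤ => (x.1 ^ 2 + x.2.1 ^ 2 + x.2.2 ^ 2) % (p : ℤ) = m % (p : ℤ))
    (Finset.Icc (1 : ℤ) (p : ℤ) ×ˢ Finset.Icc (1 : ℤ) (p : ℤ) ×ˢ Finset.Icc (1 : ℤ) (p : ℤ))

/-!
For `p ∤ a` the Gauss sums satisfy `S(p^(k+2), a) = p S(p^k, a)`: writing `r = s + p^(k+1) t`,
the sum over `t` is a complete character sum that vanishes unless `p ∣ s`. Hence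
`S(p^(2l+1), a) = p^l S(p, a)`, so for `n = p^(2l) m` each summand of `A(p^(2l+1); n)` is `p^(3l)`
times the corresponding summand of `A(p; m)`, which is `p`-periodic in `a`; this gives
`A(p^(2l+1); p^(2l) m) = p^(-l) A(p; m)`. Finally, expanding the cube and summing over all residues
`a mod p` by orthogonality gives `∑ₐ S(p,a)³ e(-ma/p) = p T(m)`, of which `a ≡ 0` contributes `p³`.
-/

open Function

lemma e_add (x y : ℝ) : e (x + y) = e x * e y := by
  simp only [e, Complex.ofReal_add, mul_add, Complex.exp_add]

lemma e_intCast (k : ℤ) : e k = 1 :=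
  Complex.exp_eq_one_iff.2 ⟨k, by push_cast; ring⟩

lemma e_zero : e 0 = 1 := by simpa using e_intCast 0

lemma e_add_intCast (x : ℝ) (k : ℤ) : e (x + k) = e x := by
  rw [e_add, e_intCast, mul_one]

lemma e_intCast_div_eq_stdAddChar (N : ℕ) [NeZero N] (k : ℤ) :
    e (k / N) = ZMod.stdAddChar (k : ZMod N) := by
  rw [ZMod.stdAddChar_coe, e]
  push_cast
  ring_nf

lemma ZMod.sum_range_natCast {M : Type*} [AddCommMonoid M] (N : ℕ) [NeZero N] (f : ZMod N → M) :
    ∑ r ∈ range N, f r = ∑ x, f x :=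
  sum_nbij' (↑) ZMod.val (by simp) (by simp [ZMod.val_lt])
    (fun _ hr => ZMod.val_cast_of_lt (mem_range.1 hr)) (fun x _ => ZMod.natCast_zmod_val x)
    (fun _ _ => rfl)

lemma sum_range_e_mul_div {q : ℕ} (hq : q ≠ 0) (k : ℤ) :
    ∑ b ∈ range q, e (k * b / q) = if (q : ℤ) ∣ k then (q : ℂ) else 0 := by
  have : NeZero q := ⟨hq⟩
  have hterm (b : ℕ) : e (k * b / q) = ZMod.stdAddChar ((b : ZMod q) * (k : ZMod q)) := by
    rw [show (k : ℝ) * b / q = ((b * k : ℤ) : ℝ) / q by push_cast; ring,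
      e_intCast_div_eq_stdAddChar]
    push_cast
    rfl
  simp_rw [hterm]
  rw [ZMod.sum_range_natCast q (fun x => ZMod.stdAddChar (x * (k : ZMod q))),
    AddChar.sum_mulShift _ (ZMod.isPrimitive_stdAddChar q)]
  simp only [ZMod.intCast_zmod_eq_zero_iff_dvd, ZMod.card]
  split_ifs <;> simp

lemma sum_range_mul_eq_sum_sum {M : Type*} [AddCommMonoid M] (m n : ℕ) (f : ℕ → M) :
    ∑ r ∈ range (m * n), f r = ∑ t ∈ range m, ∑ s ∈ range n, f (s + n * t) := by
  rw [← Fin.sum_univ_eq_sum_range, ← finProdFinEquiv.sum_comp, Fintype.sum_prod_type,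
    ← Fin.sum_univ_eq_sum_range (fun t => ∑ s ∈ range n, f (s + n * t))]
  simp_rw [← Fin.sum_univ_eq_sum_range (fun s => f (s + n * _))]
  rfl

lemma Function.Periodic.sum_range_mul {M : Type*} [AddCommMonoid M] {f : ℕ → M} {p : ℕ}
    (hf : Periodic f p) (N : ℕ) : ∑ r ∈ range (N * p), f r = N • ∑ r ∈ range p, f r := by
  rw [sum_range_mul_eq_sum_sum]
  simp_rw [mul_comm p, ← smul_eq_mul, hf.nsmul _ _, sum_const, card_range]

lemma sum_Icc_one_eq_sum_range {M : Type*} [AddCancelCommMonoid M] {f : ℕ → M} {q : ℕ}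
    (hf : f q = f 0) : ∑ r ∈ Icc 1 q, f r = ∑ r ∈ range q, f r := by
  have h := (sum_range_succ' f q).symm.trans (sum_range_succ f q)
  rw [hf, add_left_inj, range_eq_Ico, sum_Ico_add'] at h
  rw [range_eq_Ico, ← h, zero_add, Ico_add_one_right_eq_Icc]

lemma Function.Periodic.sum_Icc_one_mul {M : Type*} [AddCancelCommMonoid M] {f : ℕ → M} {p : ℕ}
    (hf : Periodic f p) (N : ℕ) : ∑ r ∈ Icc 1 (N * p), f r = N • ∑ r ∈ Icc 1 p, f r := by
  rw [sum_Icc_one_eq_sum_range (by simpa using hf.nat_mul_eq N),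
    sum_Icc_one_eq_sum_range (by simpa using hf 0), hf.sum_range_mul]

lemma sum_range_mul_ite_dvd {M : Type*} [AddCommMonoid M] {p : ℕ} (hp : 0 < p) (N : ℕ)
    (f : ℕ → M) : ∑ s ∈ range (N * p), (if p ∣ s then f s else 0) = ∑ u ∈ range N, f (p * u) := by
  rw [sum_range_mul_eq_sum_sum]
  refine sum_congr rfl fun u _ => ?_
  have hdvd (v : ℕ) (hv : v ∈ range p) : p ∣ v + p * u ↔ v = 0 := by
    rw [Nat.dvd_add_left (dvd_mul_right p u)]
    exact ⟨fun h => Nat.eq_zero_of_dvd_of_lt h (mem_range.1 hv), by rintro rfl; exact dvd_zero p⟩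
  rw [sum_congr rfl fun v hv => if_congr (hdvd v hv) rfl rfl, sum_ite_eq' _ _ _,
    if_pos (mem_range.2 hp), zero_add]

lemma S_eq_sum_range {q : ℕ} (hq : q ≠ 0) (a : ℤ) :
    S q a = ∑ r ∈ range q, e (a * r ^ 2 / q) := by
  refine sum_Icc_one_eq_sum_range ?_
  rw [show (a : ℝ) * (q : ℕ) ^ 2 / q = ((a * q : ℤ) : ℝ) by push_cast; field_simp, e_intCast]
  simpa using e_zero.symm

lemma S_add_self (q : ℕ) (a : ℤ) : S q (a + q) = S q a := by
  rcases eq_or_ne q 0 with rfl | hq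
  · simp
  refine sum_congr rfl fun r _ => ?_
  rw [show ((a + q : ℤ) : ℝ) * (r : ℝ) ^ 2 / q = a * r ^ 2 / q + ((r ^ 2 : ℕ) : ℤ) by
    push_cast; field_simp, e_add_intCast]

lemma S_zero (q : ℕ) : S q 0 = q := by
  simp [S, e_zero]

lemma S_eq_sum_Icc_int (q : ℕ) (a : ℤ) : S q a = ∑ x ∈ Icc (1 : ℤ) q, e (a * x ^ 2 / q) := by
  have hIcc : (Icc 1 q).map Nat.castEmbedding = Icc (1 : ℤ) q := by
    ext x
    simp only [mem_map, mem_Icc, Nat.castEmbedding_apply]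
    exact ⟨by rintro ⟨r, hr, rfl⟩; exact_mod_cast hr,
      fun hx => ⟨x.toNat, by omega, by omega⟩⟩
  rw [← hIcc, sum_map]
  rfl

lemma S_prime_pow_add_two {p : ℕ} (hp : p.Prime) (hodd : Odd p) {a : ℤ} (ha : ¬ (p : ℤ) ∣ a)
    (k : ℕ) : S (p ^ (k + 2)) a = p * S (p ^ k) a := by
  have hp0 : (p : ℝ) ≠ 0 := by exact_mod_cast hp.ne_zero
  have hsplit (s t : ℕ) : e (a * ((s + p ^ (k + 1) * t : ℕ) : ℝ) ^ 2 / (p ^ (k + 2) : ℕ))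
      = e (a * (s : ℝ) ^ 2 / (p ^ (k + 2) : ℕ)) * e ((2 * a * s : ℤ) * t / p) := by
    rw [← e_add, ← e_add_intCast (_ + _) (a * p ^ k * t ^ 2)]
    congr 1
    push_cast
    field_simp
    ring
  have hdvd (s : ℕ) : (p : ℤ) ∣ 2 * a * s ↔ p ∣ s := by
    have hpZ : Prime (p : ℤ) := Nat.prime_iff_prime_int.1 hp
    have hp2 : ¬ (p : ℤ) ∣ 2 := fun h => by
      rw [(Nat.prime_dvd_prime_iff_eq hp Nat.prime_two).1 (by exact_mod_cast h)] at hodd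
      exact Nat.not_odd_iff_even.2 even_two hodd
    simp [hpZ.dvd_mul, hp2, ha, Int.natCast_dvd_natCast]
  calc S (p ^ (k + 2)) a
      = ∑ t ∈ range p, ∑ s ∈ range (p ^ (k + 1)),
          e (a * ((s + p ^ (k + 1) * t : ℕ) : ℝ) ^ 2 / (p ^ (k + 2) : ℕ)) := by
        rw [S_eq_sum_range (pow_ne_zero _ hp.ne_zero), pow_succ' p (k + 1),
          sum_range_mul_eq_sum_sum]
    _ = ∑ s ∈ range (p ^ (k + 1)), e (a * (s : ℝ) ^ 2 / (p ^ (k + 2) : ℕ)) *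
          ∑ t ∈ range p, e ((2 * a * s : ℤ) * t / p) := by
        rw [sum_comm]
        simp_rw [hsplit, mul_sum]
    _ = ∑ s ∈ range (p ^ k * p),
          if p ∣ s then p * e (a * (s : ℝ) ^ 2 / (p ^ (k + 2) : ℕ)) else 0 := by
        rw [← pow_succ]
        simp_rw [sum_range_e_mul_div hp.ne_zero, hdvd, mul_ite, mul_zero, mul_comm]
    _ = ∑ u ∈ range (p ^ k), p * e (a * (u : ℝ) ^ 2 / (p ^ k : ℕ)) := by
        rw [sum_range_mul_ite_dvd hp.pos]
        refine sum_congr rfl fun u _ => ?_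
        congr 2
        push_cast
        field_simp
        ring
    _ = p * S (p ^ k) a := by
        rw [← mul_sum, S_eq_sum_range (pow_ne_zero _ hp.ne_zero)]

lemma S_prime_pow_two_mul_add_one {p : ℕ} (hp : p.Prime) (hodd : Odd p) {a : ℤ}
    (ha : ¬ (p : ℤ) ∣ a) (l : ℕ) : S (p ^ (2 * l + 1)) a = p ^ l * S p a := by
  induction l with
  | zero => simp
  | succ l ih =>
    rw [show 2 * (l + 1) + 1 = 2 * l + 1 + 2 by ring, S_prime_pow_add_two hp hodd ha, ih, pow_succ]
    ring

lemma sum_pow_three {ι R : Type*} [CommSemiring R] (s : Finset ι) (f : ι → R) :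
    (∑ x ∈ s, f x) ^ 3 = ∑ x ∈ s ×ˢ s ×ˢ s, f x.1 * f x.2.1 * f x.2.2 := by
  rw [pow_three]
  simp_rw [sum_mul, mul_sum, sum_product, mul_assoc]

noncomputable def gaussCubeTerm (q n a : ℕ) : ℂ :=
  S q a ^ 3 * e (-((n : ℝ) * (a : ℝ) / (q : ℝ)))

lemma A_eq_sum_gaussCubeTerm (q n : ℕ) :
    A q n = (q : ℂ) ^ (-(3 : ℤ)) *
      ∑ a ∈ (Icc 1 q).filter (fun a => Nat.gcd a q = 1), gaussCubeTerm q n a := by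
  simp only [A, gaussCubeTerm, mul_sum, mul_assoc]

lemma periodic_gaussCubeTerm (q n : ℕ) : Periodic (gaussCubeTerm q n) q := fun a => by
  rcases eq_or_ne q 0 with rfl | hq
  · simp
  simp only [gaussCubeTerm]
  push_cast
  rw [S_add_self, show -((n : ℝ) * (a + q) / q) = -(n * a / q) + ((-n : ℤ) : ℝ) by
    push_cast; field_simp; ring, e_add_intCast]

lemma gaussCubeTerm_zero (q n : ℕ) : gaussCubeTerm q n 0 = q ^ 3 := by
  simp [gaussCubeTerm, S_zero, e_zero]

lemma sum_Icc_gaussCubeTerm {q : ℕ} (hq : q ≠ 0) (n : ℕ) :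
    ∑ a ∈ Icc 1 q, gaussCubeTerm q n a = q * Tcount q n := by
  set I := Icc (1 : ℤ) q
  have hterm (a : ℕ) : gaussCubeTerm q n a =
      ∑ x ∈ I ×ˢ I ×ˢ I, e ((x.1 ^ 2 + x.2.1 ^ 2 + x.2.2 ^ 2 - n : ℤ) * a / q) := by
    rw [gaussCubeTerm, S_eq_sum_Icc_int, sum_pow_three, sum_mul]
    refine sum_congr rfl fun x _ => ?_
    rw [← e_add, ← e_add, ← e_add]
    congr 1
    push_cast
    ring
  rw [sum_Icc_one_eq_sum_range (periodic_gaussCubeTerm q n).eq]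
  simp_rw [hterm]
  rw [sum_comm]
  simp_rw [sum_range_e_mul_div hq]
  rw [sum_ite, sum_const_zero, add_zero, sum_const, nsmul_eq_mul, mul_comm, Tcount]
  congr 3
  exact filter_congr fun x _ => (Int.modEq_comm.trans Int.modEq_iff_dvd).symm

lemma gaussCubeTerm_prime_pow {p : ℕ} (hp : p.Prime) (hodd : Odd p) {a : ℕ}
    (ha : Nat.Coprime a p) (l m : ℕ) :
    gaussCubeTerm (p ^ (2 * l + 1)) (p ^ (2 * l) * m) a = p ^ (3 * l) * gaussCubeTerm p m a := by
  have hpa : ¬ (p : ℤ) ∣ a :=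
    Int.natCast_dvd_natCast.not.2 ((Nat.coprime_comm.trans hp.coprime_iff_not_dvd).1 ha)
  have hp0 : (p : ℝ) ≠ 0 := by exact_mod_cast hp.ne_zero
  have he : e (-(((p ^ (2 * l) * m : ℕ) : ℝ) * a / (p ^ (2 * l + 1) : ℕ))) = e (-(m * a / p)) := by
    congr 1
    push_cast
    field_simp
    ring
  rw [gaussCubeTerm, gaussCubeTerm, S_prime_pow_two_mul_add_one hp hodd hpa, he]
  ring

lemma A_prime {p : ℕ} (hp : p.Prime) (m : ℕ) :
    A p m = (p : ℂ) ^ (-(3 : ℤ)) * (p * Tcount p m - p ^ 3) := by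
  have hfilter : (Icc 1 p).filter (fun a => Nat.gcd a p = 1) = (Icc 1 p).erase p := by
    ext a
    simp only [mem_filter, mem_erase, mem_Icc]
    constructor
    · rintro ⟨ha, hcop⟩
      refine ⟨?_, ha⟩
      rintro rfl
      exact hp.one_lt.ne' (by simpa using hcop)
    · rintro ⟨hap, ha⟩
      refine ⟨ha, Nat.coprime_comm.1 (hp.coprime_iff_not_dvd.2 fun h => hap ?_)⟩
      exact le_antisymm ha.2 (Nat.le_of_dvd (by omega) h)
  rw [A_eq_sum_gaussCubeTerm, hfilter, sum_erase_eq_sub (right_mem_Icc.2 hp.one_lt.le),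
    sum_Icc_gaussCubeTerm hp.ne_zero, (periodic_gaussCubeTerm p m).eq, gaussCubeTerm_zero]

lemma A_prime_pow {p : ℕ} (hp : p.Prime) (hodd : Odd p) (l m : ℕ) :
    A (p ^ (2 * l + 1)) (p ^ (2 * l) * m) = (p : ℂ) ^ (-(l : ℤ)) * A p m := by
  have hp0 : (p : ℂ) ≠ 0 := by exact_mod_cast hp.ne_zero
  let H : ℕ → ℂ := fun a => if Nat.gcd a p = 1 then gaussCubeTerm p m a else 0
  have hH : Periodic H p := fun a => by
    simp only [H, Nat.gcd_add_self_left, periodic_gaussCubeTerm p m a]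
  have hterm (a : ℕ) : (if Nat.gcd a (p ^ (2 * l + 1)) = 1 then
      gaussCubeTerm (p ^ (2 * l + 1)) (p ^ (2 * l) * m) a else 0) = p ^ (3 * l) * H a := by
    simp only [H, show Nat.gcd a (p ^ (2 * l + 1)) = 1 ↔ Nat.gcd a p = 1 from
      Nat.coprime_pow_right_iff (by omega) a p]
    split_ifs with hcop
    · exact gaussCubeTerm_prime_pow hp hodd hcop l m
    · simp
  rw [A_eq_sum_gaussCubeTerm, A_eq_sum_gaussCubeTerm, sum_filter, sum_filter]
  simp_rw [hterm]
  rw [← mul_sum, pow_succ, hH.sum_Icc_one_mul, nsmul_eq_mul]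
  push_cast
  simp only [zpow_neg, zpow_natCast]
  field_simp
  ring

theorem A_odd_prime_power_count (p : ℕ) (hp : p.Prime) (hodd : Odd p) (n l : ℕ)
    (hdvd : p ^ (2 * l) ∣ n) :
    A (p ^ (2 * l + 1)) n =
      (p : ℂ) ^ (-(l : ℤ) - 3) *
        ((p : ℂ) * (Tcount p ((n / p ^ (2 * l) : ℕ) : ℤ) : ℂ) - (p : ℂ) ^ 3) := by
  obtain ⟨m, rfl⟩ := hdvd
  have hp0 : (p : ℂ) ≠ 0 := by exact_mod_cast hp.ne_zero
  rw [Nat.mul_div_cancel_left m (pow_pos hp.pos _), A_prime_pow hp hodd, A_prime hp, ← mul_assoc,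
    ← zpow_add₀ hp0]
  ring_nf
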